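/- arXiv:2306.02641 — 3 statements merged into one kernel-verified Lean document; each statement's English description precedes it below -/
import Mathlib

section
/- The series identity ∑_{k=0}^∞ (C(2k,k)·C(3k,k)/(-216)^k)·(3H_{3k} - H_k) = log(8/9) · ∑_{k=0}^∞ C(2k,k)·C(3k,k)/(-216)^k holds, both series being convergent. -/
/-- The `n`-th harm number `H_n = ∑_{i=1}^n 1/i`. -/
noncomputable def harm (n : ℕ) : ℝ := ∑ i ∈ Finset.range n, 1 / (i + 1 : ℝ)

noncomputable def bb (k : ℕ) : ℝ :=
  (Nat.factorial (3 * k) : ℝ) / ((Nat.factorial k : ℝ) ^ 3 * 27 ^ k)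

lemma bb_pos (k : ℕ) : 0 < bb k := by
  apply div_pos
  · exact_mod_cast Nat.factorial_pos _
  · positivity

lemma bb_succ (k : ℕ) :
    bb (k + 1) = bb k * (((3 * k + 1) * (3 * k + 2)) / (9 * ((k : ℝ) + 1) ^ 2)) := by
  have h3 : 3 * (k + 1) = (3 * k + 2) + 1 := by omega
  unfold bb
  rw [h3, Nat.factorial_succ]
  have h2 : 3 * k + 2 = (3 * k + 1) + 1 := by omega
  rw [h2, Nat.factorial_succ]
  have h1 : 3 * k + 1 = (3 * k) + 1 := by omega
  rw [h1, Nat.factorial_succ, Nat.factorial_succ]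
  have hk : (Nat.factorial k : ℝ) ≠ 0 := by exact_mod_cast (Nat.factorial_pos k).ne'
  have h27 : (27 : ℝ) ^ k ≠ 0 := by positivity
  push_cast
  field_simp
  ring

lemma bb_zero : bb 0 = 1 := by simp [bb, Nat.factorial]

lemma bb_le_one (k : ℕ) : bb k ≤ 1 := by
  induction k with
  | zero => simp [bb_zero]
  | succ n ih =>
    rw [bb_succ]
    have h1 : ((3 * n + 1) * (3 * n + 2) : ℝ) / (9 * ((n : ℝ) + 1) ^ 2) ≤ 1 := by
      rw [div_le_one (by positivity)]
      nlinarith [Nat.cast_nonneg (α := ℝ) n]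
    calc bb n * (((3 * n + 1) * (3 * n + 2) : ℝ) / (9 * ((n : ℝ) + 1) ^ 2))
        ≤ 1 * 1 := by
          apply mul_le_mul ih h1 (by positivity) zero_le_one
      _ = 1 := by ring
  
lemma harm_succ (n : ℕ) : harm (n + 1) = harm n + 1 / ((n : ℝ) + 1) := by
  simp [harm, Finset.sum_range_succ]

lemma harm_zero : harm 0 = 0 := by simp [harm]

lemma harm_nonneg (n : ℕ) : 0 ≤ harm n := by
  apply Finset.sum_nonneg
  intro i _
  positivity

lemma harm_le (n : ℕ) : harm n ≤ n := by
  induction n with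
  | zero => simp [harm_zero]
  | succ m ih =>
    rw [harm_succ]
    push_cast
    have : 1 / ((m : ℝ) + 1) ≤ 1 := by
      rw [div_le_one (by positivity)]; linarith [Nat.cast_nonneg (α := ℝ) m]
    linarith

lemma harm_mono {m n : ℕ} (h : m ≤ n) : harm m ≤ harm n := by
  unfold harm
  apply Finset.sum_le_sum_of_subset_of_nonneg (Finset.range_subset_range.mpr h)
  intro i _ _
  positivity


lemma cert_alg (a c B : ℝ) (h1 : c - a ≠ 0) (h2 : c + 1 - a ≠ 0) (h4 : c + 1 ≠ 0)
    (h5 : a + 1 ≠ 0) (h6 : (3:ℝ)*a + 1 ≠ 0) (h7 : (3:ℝ)*a + 2 ≠ 0) :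
    B * (1 / (c + 1 - a)) =
      B * (((3*c+1)*(3*c+2)) / (9*(c+1)^2)) * (1/(c-a))
        + ((B * ((3*a+1)*(3*a+2)/(9*(a+1)^2))) * (-((a:ℝ)+1)^2/((c+1-((a:ℝ)+1))*(c+1)^2))
           - B * (-a^2/((c+1-a)*(c+1)^2))) := by
  have h3 : c + 1 - (a + 1) ≠ 0 := by
    intro h; apply h1; linarith
  field_simp
  ring

lemma step_alg (c B S : ℝ) (hc : 0 ≤ c) :
    ((3*c+1)*(3*c+2))/(9*(c+1)^2) * (B * S)
      + (B * (-c^2/((c+1-c)*(c+1)^2)) - 1 * (-(0:ℝ)^2/((c+1-(0:ℝ))*(c+1)^2)) ) + B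
    = (B * ((3*c+1)*(3*c+2)/(9*(c+1)^2))) *
        (S + (3/(3*c+1) + 3/(3*c+2) + 3/(3*c+3)) - 1/(c+1)) := by
  have h4 : c + 1 ≠ 0 := by positivity
  have h5 : (3:ℝ)*c + 1 ≠ 0 := by positivity
  have h6 : (3:ℝ)*c + 2 ≠ 0 := by positivity
  have h7 : (3:ℝ)*c + 3 ≠ 0 := by positivity
  have e : c + 1 - c = 1 := by ring
  rw [e]
  field_simp
  ring

/-- The key finite identity: `b_k (3 H_{3k} - H_k) = ∑_{j<k} b_j / (k - j)`. -/
lemma key_identity (k : ℕ) :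
    ∑ j ∈ Finset.range k, bb j * (1 / ((k : ℝ) - j)) = bb k * (3 * harm (3 * k) - harm k) := by
  induction k with
  | zero => simp [harm_zero]
  | succ k ih =>
    have hc0 : (0:ℝ) ≤ (k:ℝ) := Nat.cast_nonneg k
    push_cast
    set G : ℕ → ℝ := fun j => bb j * (-(j:ℝ)^2/(((k:ℝ)+1-(j:ℝ))*((k:ℝ)+1)^2)) with hG
    have key : ∀ j ∈ Finset.range k,
        bb j * (1 / ((k:ℝ) + 1 - (j:ℝ))) =
          bb j * (((3*(k:ℝ)+1)*(3*(k:ℝ)+2)) / (9*((k:ℝ)+1)^2)) * (1/((k:ℝ)-(j:ℝ)))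
            + (G (j+1) - G j) := by
      intro j hj
      rw [Finset.mem_range] at hj
      have hjc : (j:ℝ) < (k:ℝ) := by exact_mod_cast hj
      have h1 : (k:ℝ) - j ≠ 0 := by intro h; nlinarith
      have h2 : (k:ℝ) + 1 - j ≠ 0 := by intro h; nlinarith
      have h4 : (k:ℝ) + 1 ≠ 0 := by positivity
      have h5 : (j:ℝ) + 1 ≠ 0 := by positivity
      have h6 : (3:ℝ)*(j:ℝ) + 1 ≠ 0 := by positivity
      have h7 : (3:ℝ)*(j:ℝ) + 2 ≠ 0 := by positivity
      have hcert := cert_alg (j:ℝ) (k:ℝ) (bb j) h1 h2 h4 h5 h6 h7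
      simp only [hG]
      rw [bb_succ j]
      push_cast
      linear_combination hcert
    rw [Finset.sum_range_succ, Finset.sum_congr rfl key, Finset.sum_add_distrib,
      Finset.sum_range_sub G]
    have e1 : ∑ x ∈ Finset.range k,
        bb x * (((3*(k:ℝ)+1)*(3*(k:ℝ)+2)) / (9*((k:ℝ)+1)^2)) * (1/((k:ℝ)-(x:ℝ)))
        = (((3*(k:ℝ)+1)*(3*(k:ℝ)+2)) / (9*((k:ℝ)+1)^2)) *
            ∑ x ∈ Finset.range k, bb x * (1/((k:ℝ)-(x:ℝ))) := by
      rw [Finset.mul_sum]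
      exact Finset.sum_congr rfl (fun x _ => by ring)
    rw [e1, ih]
    have h3k : 3 * (k+1) = 3*k+1+1+1 := by omega
    rw [h3k, harm_succ, harm_succ, harm_succ, harm_succ, bb_succ k]
    simp only [hG]
    rw [bb_zero]
    push_cast
    linear_combination (step_alg (k:ℝ) (bb k) (3*harm (3*k) - harm k) hc0)
lemma term_eq (k : ℕ) :
    ((Nat.choose (2 * k) k : ℝ) * (Nat.choose (3 * k) k : ℝ) / (-216 : ℝ) ^ k)
      = bb k * (-1/8 : ℝ) ^ k := by
  have h1 : ((2*k).choose k : ℝ) =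
      (Nat.factorial (2*k) : ℝ) / ((Nat.factorial k : ℝ) * (Nat.factorial k : ℝ)) := by
    rw [Nat.cast_choose ℝ (by omega : k ≤ 2*k), (by omega : 2*k - k = k)]
  have h2 : ((3*k).choose k : ℝ) =
      (Nat.factorial (3*k) : ℝ) / ((Nat.factorial k : ℝ) * (Nat.factorial (2*k) : ℝ)) := by
    rw [Nat.cast_choose ℝ (by omega : k ≤ 3*k), (by omega : 3*k - k = 2*k)]
  have hx : ((-1/8 : ℝ)) ^ k = 27 ^ k / (-216 : ℝ) ^ k := by
    rw [← div_pow]; norm_num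
  rw [h1, h2, hx]
  unfold bb
  have e1 : (Nat.factorial k : ℝ) ≠ 0 := by exact_mod_cast (Nat.factorial_pos k).ne'
  have e2 : (Nat.factorial (2*k) : ℝ) ≠ 0 := by exact_mod_cast (Nat.factorial_pos (2*k)).ne'
  have e3 : (-216 : ℝ) ^ k ≠ 0 := by apply pow_ne_zero; norm_num
  have e4 : (27 : ℝ) ^ k ≠ 0 := by positivity
  field_simp

lemma sigma_nonneg (k : ℕ) : 0 ≤ 3 * harm (3 * k) - harm k := by
  have h1 : harm k ≤ harm (3 * k) := harm_mono (by omega)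
  have h2 : 0 ≤ harm (3 * k) := harm_nonneg _
  linarith

lemma sigma_le (k : ℕ) : 3 * harm (3 * k) - harm k ≤ 9 * k := by
  have h1 : harm (3 * k) ≤ ((3 * k : ℕ) : ℝ) := harm_le _
  have h2 : 0 ≤ harm k := harm_nonneg _
  push_cast at h1
  linarith

lemma u_norm (k : ℕ) : ‖bb k * (-1/8 : ℝ) ^ k‖ ≤ (1/8 : ℝ) ^ k := by
  rw [Real.norm_eq_abs, abs_mul, abs_pow, abs_of_pos (bb_pos k),
    (by norm_num : |(-1/8 : ℝ)| = 1/8)]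
  calc bb k * (1/8 : ℝ) ^ k ≤ 1 * (1/8 : ℝ) ^ k := by
        apply mul_le_mul_of_nonneg_right (bb_le_one k) (by positivity)
    _ = (1/8 : ℝ) ^ k := by ring

lemma summable_u : Summable (fun k : ℕ => bb k * (-1/8 : ℝ) ^ k) :=
  Summable.of_norm_bounded (summable_geometric_of_lt_one (by norm_num) (by norm_num)) u_norm

lemma summable_u_norm : Summable (fun k : ℕ => ‖bb k * (-1/8 : ℝ) ^ k‖) :=
  Summable.of_nonneg_of_le (fun k => norm_nonneg _) u_norm
    (summable_geometric_of_lt_one (by norm_num) (by norm_num))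

lemma summable_us :
    Summable (fun k : ℕ => bb k * (-1/8 : ℝ) ^ k * (3 * harm (3*k) - harm k)) := by
  apply Summable.of_norm_bounded (g := fun k : ℕ => 9 * ((k : ℝ) ^ 1 * (1/8 : ℝ) ^ k))
  · apply Summable.mul_left
    apply summable_pow_mul_geometric_of_norm_lt_one
    rw [Real.norm_eq_abs, abs_lt]; constructor <;> norm_num
  · intro k
    rw [norm_mul]
    have h1 := u_norm k
    have h2 : ‖3 * harm (3*k) - harm k‖ ≤ 9 * k := by
      rw [Real.norm_eq_abs, abs_of_nonneg (sigma_nonneg k)]; exact sigma_le k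
    calc ‖bb k * (-1/8 : ℝ) ^ k‖ * ‖3 * harm (3*k) - harm k‖
        ≤ (1/8 : ℝ) ^ k * (9 * k) := by
          apply mul_le_mul h1 h2 (norm_nonneg _) (by positivity)
      _ = 9 * ((k : ℝ) ^ 1 * (1/8 : ℝ) ^ k) := by ring

lemma v_hasSum : HasSum (fun m : ℕ => (-1/8 : ℝ) ^ (m+1) / (m+1)) (Real.log (8/9)) := by
  have h := Real.hasSum_pow_div_log_of_abs_lt_one (x := (-1/8 : ℝ))
    (by rw [abs_lt]; constructor <;> norm_num)
  have e : -Real.log (1 - (-1/8 : ℝ)) = Real.log (8/9) := by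
    rw [(by norm_num : (1 : ℝ) - (-1/8) = 9/8), (by norm_num : (8/9 : ℝ) = (9/8 : ℝ)⁻¹),
      Real.log_inv]
  rwa [e] at h

lemma summable_v_norm : Summable (fun m : ℕ => ‖(-1/8 : ℝ) ^ (m+1) / (m+1)‖) := by
  apply Summable.of_nonneg_of_le (f := fun m : ℕ => (1/8 : ℝ) ^ m)
    (fun k => norm_nonneg _)
  · intro m
    rw [Real.norm_eq_abs, abs_div, abs_pow, (by norm_num : |(-1/8 : ℝ)| = 1/8)]
    have hm : (1:ℝ) ≤ |(m:ℝ) + 1| := by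
      rw [abs_of_pos (by positivity)]
      linarith [Nat.cast_nonneg (α := ℝ) m]
    calc (1/8 : ℝ) ^ (m+1) / |(m:ℝ)+1| ≤ (1/8 : ℝ) ^ (m+1) / 1 := by
          apply div_le_div_of_nonneg_left (by positivity) (by norm_num) hm
      _ ≤ (1/8 : ℝ) ^ m := by
          rw [div_one, pow_succ]
          nlinarith [pow_pos (by norm_num : (0:ℝ) < 1/8) m]
  · exact summable_geometric_of_lt_one (by norm_num) (by norm_num)

lemma bb_inner_sum (n : ℕ) :
    ∑ k ∈ Finset.range (n+1),
        (bb k * (-1/8 : ℝ) ^ k) * ((-1/8 : ℝ) ^ ((n-k)+1) / ((n-k : ℕ) + 1)) =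
      (bb (n+1) * (-1/8 : ℝ) ^ (n+1)) * (3 * harm (3 * (n+1)) - harm (n+1)) := by
  have e1 : ∀ k ∈ Finset.range (n+1),
      (bb k * (-1/8 : ℝ) ^ k) * ((-1/8 : ℝ) ^ ((n-k)+1) / ((n-k : ℕ) + 1)) =
        (-1/8 : ℝ) ^ (n+1) * (bb k * (1 / (((n+1 : ℕ) : ℝ) - (k : ℝ)))) := by
    intro k hk
    rw [Finset.mem_range] at hk
    have hkn : k ≤ n := by omega
    have ecast : ((n - k : ℕ) : ℝ) + 1 = ((n+1 : ℕ) : ℝ) - (k : ℝ) := by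
      rw [Nat.cast_sub hkn]; push_cast; ring
    have epow : (-1/8 : ℝ) ^ k * (-1/8 : ℝ) ^ ((n-k)+1) = (-1/8 : ℝ) ^ (n+1) := by
      rw [← pow_add]; congr 1; omega
    rw [ecast, show (bb k * (-1/8 : ℝ) ^ k) * ((-1/8 : ℝ) ^ ((n-k)+1) / (((n+1 : ℕ) : ℝ) - (k:ℝ)))
      = ((-1/8 : ℝ) ^ k * (-1/8 : ℝ) ^ ((n-k)+1)) * (bb k * (1 / (((n+1 : ℕ) : ℝ) - (k:ℝ))))
      from by ring, epow]
  rw [Finset.sum_congr rfl e1, ← Finset.mul_sum, key_identity (n+1)]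
  ring

theorem stmt_0 :
    Summable (fun k : ℕ =>
      ((Nat.choose (2 * k) k : ℝ) * (Nat.choose (3 * k) k : ℝ) / (-216 : ℝ) ^ k) *
        (3 * harm (3 * k) - harm k)) ∧
    Summable (fun k : ℕ =>
      (Nat.choose (2 * k) k : ℝ) * (Nat.choose (3 * k) k : ℝ) / (-216 : ℝ) ^ k) ∧
    ∑' k : ℕ, ((Nat.choose (2 * k) k : ℝ) * (Nat.choose (3 * k) k : ℝ) / (-216 : ℝ) ^ k) *
        (3 * harm (3 * k) - harm k) =
      Real.log (8 / 9) *
        ∑' k : ℕ, (Nat.choose (2 * k) k : ℝ) * (Nat.choose (3 * k) k : ℝ) / (-216 : ℝ) ^ k := by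
  have hterm : ∀ k : ℕ,
      ((Nat.choose (2 * k) k : ℝ) * (Nat.choose (3 * k) k : ℝ) / (-216 : ℝ) ^ k)
        = bb k * (-1/8 : ℝ) ^ k := term_eq
  have hterm2 : ∀ k : ℕ,
      ((Nat.choose (2 * k) k : ℝ) * (Nat.choose (3 * k) k : ℝ) / (-216 : ℝ) ^ k) *
          (3 * harm (3 * k) - harm k)
        = bb k * (-1/8 : ℝ) ^ k * (3 * harm (3 * k) - harm k) := by
    intro k; rw [hterm k]
  refine ⟨summable_us.congr (fun k => (hterm2 k).symm),
    summable_u.congr (fun k => (hterm k).symm), ?_⟩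
  rw [tsum_congr hterm2, tsum_congr hterm]
  -- Cauchy product
  have hcauchy := tsum_mul_tsum_eq_tsum_sum_range_of_summable_norm
    (f := fun k : ℕ => bb k * (-1/8 : ℝ) ^ k)
    (g := fun m : ℕ => (-1/8 : ℝ) ^ (m+1) / (m+1)) summable_u_norm summable_v_norm
  rw [v_hasSum.tsum_eq] at hcauchy
  have hinner : ∀ n : ℕ,
      ∑ k ∈ Finset.range (n+1),
          (bb k * (-1/8 : ℝ) ^ k) * ((-1/8 : ℝ) ^ ((n-k)+1) / ((n-k : ℕ) + 1)) =
        (bb (n+1) * (-1/8 : ℝ) ^ (n+1)) * (3 * harm (3 * (n+1)) - harm (n+1)) := bb_inner_sum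
  rw [tsum_congr hinner] at hcauchy
  have hshift : ∑' k : ℕ, bb k * (-1/8 : ℝ) ^ k * (3 * harm (3 * k) - harm k)
      = ∑' n : ℕ, bb (n+1) * (-1/8 : ℝ) ^ (n+1) * (3 * harm (3 * (n+1)) - harm (n+1)) := by
    rw [Summable.tsum_eq_zero_add summable_us]
    simp [harm_zero]
  rw [hshift, ← hcauchy, mul_comm]
end

section
/- The series identity ∑_{k=0}^∞ (C(2k,k)·C(4k,2k)/(-4032)^k)·(2H_{4k} - H_{2k}) = (1/2)·log(63/64) · ∑_{k=0}^∞ C(2k,k)·C(4k,2k)/(-4032)^k holds, both series being convergent. -/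
noncomputable def cc (m : ℕ) : ℝ :=
  (Nat.choose (2 * m) m : ℝ) * (Nat.choose (4 * m) (2 * m) : ℝ)

lemma cc_eq (m : ℕ) : cc m = (Nat.centralBinom m : ℝ) * (Nat.centralBinom (2 * m) : ℝ) := by
  unfold cc Nat.centralBinom
  rw [show 2 * (2 * m) = 4 * m by ring]

lemma cc_rec (m : ℕ) :
    ((m : ℝ) + 1) ^ 2 * cc (m + 1) = 4 * (4 * m + 1) * (4 * m + 3) * cc m := by
  have h1 : ((m : ℝ) + 1) * (Nat.centralBinom (m + 1) : ℝ) =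
      2 * (2 * m + 1) * (Nat.centralBinom m : ℝ) := by
    exact_mod_cast congrArg (Nat.cast (R := ℝ)) (Nat.succ_mul_centralBinom_succ m)
  have h2 : (2 * (m : ℝ) + 2) * (Nat.centralBinom (2 * m + 2) : ℝ) =
      2 * (4 * m + 3) * (Nat.centralBinom (2 * m + 1) : ℝ) := by
    have := congrArg (Nat.cast (R := ℝ)) (Nat.succ_mul_centralBinom_succ (2 * m + 1))
    push_cast at this
    linarith [this]
  have h3 : (2 * (m : ℝ) + 1) * (Nat.centralBinom (2 * m + 1) : ℝ) =
      2 * (4 * m + 1) * (Nat.centralBinom (2 * m) : ℝ) := by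
    have := congrArg (Nat.cast (R := ℝ)) (Nat.succ_mul_centralBinom_succ (2 * m))
    push_cast at this
    linarith [this]
  have hne : ((2 * (m : ℝ) + 1) * (2 * (m : ℝ) + 2)) ≠ 0 := by positivity
  apply mul_left_cancel₀ hne
  rw [cc_eq, cc_eq, show 2 * (m + 1) = 2 * m + 2 by ring]
  push_cast
  linear_combination
    ((2 * (m : ℝ) + 1) * (2 * m + 2) * ((m : ℝ) + 1) * (Nat.centralBinom (2 * m + 2) : ℝ)) * h1 +
    (2 * ((m : ℝ) + 1) * (2 * m + 1) ^ 2 * (Nat.centralBinom m : ℝ)) * h2 +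
    (4 * ((m : ℝ) + 1) * (2 * m + 1) * (4 * m + 3) * (Nat.centralBinom m : ℝ)) * h3

lemma cc_succ_eq (m : ℕ) :
    cc (m + 1) = 4 * (4 * (m : ℝ) + 1) * (4 * m + 3) * cc m / ((m : ℝ) + 1) ^ 2 := by
  rw [eq_div_iff (by positivity)]
  linear_combination cc_rec m

lemma Dstep (k : ℕ) :
    2 * harm (4 * (k + 1)) - harm (2 * (k + 1)) =
      (2 * harm (4 * k) - harm (2 * k)) + (2 / (4 * (k : ℝ) + 1) + 2 / (4 * (k : ℝ) + 3)) := by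
  rw [show 4 * (k + 1) = 4 * k + 1 + 1 + 1 + 1 by ring, show 2 * (k + 1) = 2 * k + 1 + 1 by ring,
    harm_succ, harm_succ, harm_succ, harm_succ, harm_succ, harm_succ]
  push_cast
  have h1 : (4 * (k : ℝ) + 1) ≠ 0 := by positivity
  have h2 : (4 * (k : ℝ) + 2) ≠ 0 := by positivity
  have h3 : (4 * (k : ℝ) + 3) ≠ 0 := by positivity
  have h4 : (4 * (k : ℝ) + 4) ≠ 0 := by positivity
  have h5 : (2 * (k : ℝ) + 1) ≠ 0 := by positivity
  have h6 : (2 * (k : ℝ) + 2) ≠ 0 := by positivity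
  field_simp
  ring

lemma perj (m j : ℕ) (K : ℝ) (hK : (m : ℝ) + (j : ℝ) + 1 = K) :
    (64 : ℝ) ^ (j + 1) * cc (m + 1) / (2 * ((j : ℝ) + 1)) =
      4 * (4 * K + 1) * (4 * K + 3) / (K + 1) ^ 2 *
          ((64 : ℝ) ^ (j + 1) * cc m / (2 * ((j : ℝ) + 1)))
        - (2 * K - (j : ℝ)) * 64 ^ (j + 2) * cc m / (2 * (K + 1) ^ 2)
        + (2 * K + 1 - (j : ℝ)) * 64 ^ (j + 1) * cc (m + 1) / (2 * (K + 1) ^ 2) := by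
  subst hK
  rw [cc_succ_eq m]
  have h1 : ((m : ℝ) + 1) ≠ 0 := by positivity
  have h2 : ((m : ℝ) + (j : ℝ) + 1 + 1) ≠ 0 := by positivity
  have h3 : ((j : ℝ) + 1) ≠ 0 := by positivity
  field_simp
  ring

noncomputable def phi (k i : ℕ) : ℝ :=
  (2 * (k : ℝ) + 1 - i) * 64 ^ (i + 1) * cc (k - i) / (2 * ((k : ℝ) + 1) ^ 2)

lemma key (k : ℕ) :
    cc k * (2 * harm (4 * k) - harm (2 * k)) =
      ∑ j ∈ Finset.range k, (64 : ℝ) ^ (j + 1) * cc (k - 1 - j) / (2 * ((j : ℝ) + 1)) := by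
  induction k with
  | zero => simp [harm, cc]
  | succ k ih =>
    simp only [Nat.add_sub_cancel]
    rw [Finset.sum_range_succ]
    have hterm : ∀ j ∈ Finset.range k,
        (64 : ℝ) ^ (j + 1) * cc (k - j) / (2 * ((j : ℝ) + 1)) =
          4 * (4 * (k : ℝ) + 1) * (4 * (k : ℝ) + 3) / ((k : ℝ) + 1) ^ 2 *
              ((64 : ℝ) ^ (j + 1) * cc (k - 1 - j) / (2 * ((j : ℝ) + 1)))
            - (phi k (j + 1) - phi k j) := by
      intro j hj
      have hj' := Finset.mem_range.mp hj
      have hK : ((k - 1 - j : ℕ) : ℝ) + (j : ℝ) + 1 = (k : ℝ) := by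
        have h := congrArg (Nat.cast (R := ℝ)) (show (k - 1 - j) + j + 1 = k by omega)
        push_cast at h
        linarith [h]
      simp only [phi]
      rw [show k - (j + 1) = k - 1 - j by omega, show k - j = k - 1 - j + 1 by omega,
        perj (k - 1 - j) j (k : ℝ) hK]
      push_cast
      ring
    rw [Finset.sum_congr rfl hterm, Finset.sum_sub_distrib, ← Finset.mul_sum, ← ih,
      Finset.sum_range_sub (phi k), Dstep k, cc_succ_eq k]
    simp only [phi, Nat.sub_self, Nat.sub_zero]
    have c0 : cc 0 = 1 := by simp [cc]
    rw [c0]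
    have h1 : (4 * (k : ℝ) + 1) ≠ 0 := by positivity
    have h3 : (4 * (k : ℝ) + 3) ≠ 0 := by positivity
    have h5 : ((k : ℝ) + 1) ≠ 0 := by positivity
    field_simp
    ring

noncomputable def aa (k : ℕ) : ℝ := cc k / (-4032 : ℝ) ^ k
noncomputable def gg (n : ℕ) : ℝ := (-(1 / 63) : ℝ) ^ n / (2 * (n : ℝ))

lemma choose_le_two_pow' (n i : ℕ) : n.choose i ≤ 2 ^ n := by
  rcases le_or_gt i n with h | h
  · calc n.choose i ≤ ∑ m ∈ Finset.range (n + 1), n.choose m :=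
        Finset.single_le_sum (fun _ _ => Nat.zero_le _) (Finset.mem_range.mpr (by omega))
      _ = 2 ^ n := Nat.sum_range_choose n
  · simp [Nat.choose_eq_zero_of_lt h]

lemma cc_nonneg (k : ℕ) : 0 ≤ cc k := by unfold cc; positivity

lemma cc_le (k : ℕ) : cc k ≤ 64 ^ k := by
  unfold cc
  calc (Nat.choose (2 * k) k : ℝ) * (Nat.choose (4 * k) (2 * k) : ℝ)
      ≤ (2 : ℝ) ^ (2 * k) * (2 : ℝ) ^ (4 * k) := by
        apply mul_le_mul _ _ (by positivity) (by positivity)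
        · exact_mod_cast choose_le_two_pow' (2 * k) k
        · exact_mod_cast choose_le_two_pow' (4 * k) (2 * k)
    _ = 64 ^ k := by rw [← pow_add, show 2 * k + 4 * k = 6 * k by ring, pow_mul]; norm_num

lemma aa_norm_le (k : ℕ) : ‖aa k‖ ≤ ((1 : ℝ) / 63) ^ k := by
  rw [Real.norm_eq_abs]
  unfold aa
  rw [abs_div, abs_pow, abs_of_nonneg (cc_nonneg k)]
  have : |(-4032 : ℝ)| = 4032 := by norm_num
  rw [this]
  rw [show ((1 : ℝ) / 63) ^ k = (64 : ℝ) ^ k / (4032 : ℝ) ^ k by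
    rw [← div_pow]; norm_num]
  exact div_le_div_of_nonneg_right (cc_le k) (by positivity) |>.trans_eq rfl

lemma gg_norm_le (n : ℕ) : ‖gg n‖ ≤ ((1 : ℝ) / 63) ^ n := by
  rw [Real.norm_eq_abs]
  unfold gg
  rw [abs_div, abs_pow, abs_neg, abs_of_nonneg (by norm_num : (0:ℝ) ≤ 1/63)]
  cases n with
  | zero => simp
  | succ m =>
    rw [abs_of_nonneg (by positivity : (0:ℝ) ≤ 2 * ((m + 1 : ℕ) : ℝ))]
    apply div_le_self (by positivity)
    have : (1 : ℝ) ≤ ((m + 1 : ℕ) : ℝ) := by exact_mod_cast Nat.one_le_iff_ne_zero.mpr (by omega)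
    linarith

lemma sum_geo : Summable (fun k : ℕ => ((1 : ℝ) / 63) ^ k) :=
  summable_geometric_of_lt_one (by norm_num) (by norm_num)

lemma aa_summable_norm : Summable (fun k => ‖aa k‖) :=
  Summable.of_nonneg_of_le (fun _ => norm_nonneg _) aa_norm_le sum_geo

lemma gg_summable_norm : Summable (fun n => ‖gg n‖) :=
  Summable.of_nonneg_of_le (fun _ => norm_nonneg _) gg_norm_le sum_geo

lemma hprod (k : ℕ) :
    aa k * (2 * harm (4 * k) - harm (2 * k)) =
      ∑ kl ∈ Finset.HasAntidiagonal.antidiagonal k, gg kl.1 * aa kl.2 := by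
  rw [Finset.Nat.sum_antidiagonal_eq_sum_range_succ_mk, Finset.sum_range_succ']
  have g0 : gg 0 = 0 := by simp [gg]
  rw [g0]
  simp only [zero_mul, add_zero]
  have : aa k * (2 * harm (4 * k) - harm (2 * k)) =
      (cc k * (2 * harm (4 * k) - harm (2 * k))) / (-4032 : ℝ) ^ k := by
    unfold aa; ring
  rw [this, key k, Finset.sum_div]
  refine Finset.sum_congr rfl fun j hj => ?_
  have hj' := Finset.mem_range.mp hj
  rw [show k - (j + 1) = k - 1 - j by omega,
    show ((-4032 : ℝ)) ^ k = (-4032 : ℝ) ^ (j + 1) * (-4032 : ℝ) ^ (k - 1 - j) by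
      rw [← pow_add]; congr 1; omega]
  unfold gg aa
  have hne1 : ((-4032 : ℝ)) ^ (j + 1) ≠ 0 := by
    apply pow_ne_zero; norm_num
  have hne2 : ((-4032 : ℝ)) ^ (k - 1 - j) ≠ 0 := by
    apply pow_ne_zero; norm_num
  have hj1 : ((j : ℝ) + 1) ≠ 0 := by positivity
  have he : (-(1 / 63) : ℝ) ^ (j + 1) = 64 ^ (j + 1) / (-4032 : ℝ) ^ (j + 1) := by
    rw [← div_pow]; norm_num
  rw [he]
  push_cast
  field_simp
  try exact Or.inl trivial

lemma gg_tsum : ∑' n, gg n = (1 / 2 : ℝ) * Real.log (63 / 64) := by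
  have hx : |(-(1 / 63) : ℝ)| < 1 := by
    rw [abs_neg, abs_of_nonneg (by norm_num : (0:ℝ) ≤ 1/63)]; norm_num
  have hlog := Real.hasSum_pow_div_log_of_abs_lt_one hx
  have h2 : HasSum (fun n => gg (n + 1)) ((1 / 2 : ℝ) * -Real.log (1 - -(1 / 63))) := by
    have := hlog.mul_left (1 / 2 : ℝ)
    refine this.congr_fun fun n => ?_
    unfold gg
    have hn1 : ((n : ℝ) + 1) ≠ 0 := by positivity
    push_cast
    field_simp
  have hsg : Summable gg := gg_summable_norm.of_norm
  rw [Summable.tsum_eq_zero_add hsg]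
  have g0 : gg 0 = 0 := by simp [gg]
  rw [g0, zero_add, h2.tsum_eq]
  rw [show (1 : ℝ) - -(1 / 63) = 64 / 63 by norm_num,
    show (63 / 64 : ℝ) = (64 / 63 : ℝ)⁻¹ by norm_num, Real.log_inv]

theorem stmt_2 :
    Summable (fun k : ℕ =>
      ((Nat.choose (2 * k) k : ℝ) * (Nat.choose (4 * k) (2 * k) : ℝ) / (-4032 : ℝ) ^ k) *
        (2 * harm (4 * k) - harm (2 * k))) ∧
    Summable (fun k : ℕ =>
      (Nat.choose (2 * k) k : ℝ) * (Nat.choose (4 * k) (2 * k) : ℝ) / (-4032 : ℝ) ^ k) ∧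
    ∑' k : ℕ, ((Nat.choose (2 * k) k : ℝ) * (Nat.choose (4 * k) (2 * k) : ℝ) / (-4032 : ℝ) ^ k) *
        (2 * harm (4 * k) - harm (2 * k)) =
      (1 / 2 : ℝ) * Real.log (63 / 64) *
        ∑' k : ℕ, (Nat.choose (2 * k) k : ℝ) * (Nat.choose (4 * k) (2 * k) : ℝ) / (-4032 : ℝ) ^ k := by
  refine ⟨?_, ?_, ?_⟩
  · exact ((summable_norm_sum_mul_antidiagonal_of_summable_norm gg_summable_norm
      aa_summable_norm).of_norm).congr (fun k => (hprod k).symm)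
  · exact aa_summable_norm.of_norm
  · show ∑' k : ℕ, aa k * (2 * harm (4 * k) - harm (2 * k)) =
      (1 / 2 : ℝ) * Real.log (63 / 64) * ∑' k : ℕ, aa k
    have h1 : ∑' k : ℕ, aa k * (2 * harm (4 * k) - harm (2 * k)) =
        ∑' n : ℕ, ∑ kl ∈ Finset.HasAntidiagonal.antidiagonal n, gg kl.1 * aa kl.2 := tsum_congr hprod
    have h2 := tsum_mul_tsum_eq_tsum_sum_antidiagonal_of_summable_norm gg_summable_norm
      aa_summable_norm
    rw [h1, ← h2, gg_tsum]
end

section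
/- The series identity ∑_{k=0}^∞ (C(2k,k)·C(4k,2k)/72^k)·(2H_{4k} - H_{2k}) = (log 3) · ∑_{k=0}^∞ C(2k,k)·C(4k,2k)/72^k holds, both series being convergent. -/
set_option maxHeartbeats 1000000


open Polynomial Finset

namespace Stmt3Aux

noncomputable def pA : ℕ → Polynomial ℝ
  | 0 => 1
  | k+1 => pA k * (C ((((k : ℝ)+1)^2)⁻¹) * ((X + C ((k : ℝ) + 1/4)) * (X + C ((k : ℝ) + 3/4))))

noncomputable def pB : ℕ → Polynomial ℝ
  | 0 => 1
  | m+1 => pB m * (C (((m : ℝ)+1)⁻¹) * (C 2 * X + C (m : ℝ)))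

lemma evalA (ε : ℝ) (k : ℕ) :
    (pA (k+1)).eval ε = (pA k).eval ε * ((((k : ℝ)+1)^2)⁻¹ * ((ε + (k + 1/4)) * (ε + (k + 3/4)))) := by
  simp [pA]

lemma evalB (ε : ℝ) (m : ℕ) :
    (pB (m+1)).eval ε = (pB m).eval ε * ((((m : ℝ)+1)⁻¹) * (2 * ε + m)) := by
  simp [pB]

lemma recA (ε : ℝ) (k : ℕ) :
    (((k : ℝ)+1)^2) * (pA (k+1)).eval ε = ((ε + (k + 1/4)) * (ε + (k + 3/4))) * (pA k).eval ε := by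
  rw [evalA]
  have h : ((k : ℝ)+1)^2 ≠ 0 := by positivity
  field_simp

lemma recB (ε : ℝ) (m : ℕ) :
    (((m : ℝ)+1)) * (pB (m+1)).eval ε = (2 * ε + m) * (pB m).eval ε := by
  rw [evalB]
  have h : ((m : ℝ)+1) ≠ 0 := by positivity
  field_simp

/-- Coefficientwise Euler transformation. -/
lemma euler (ε : ℝ) : ∀ n : ℕ,
    ∑ j ∈ range (n+1), (pB (n - j)).eval ε * (pA j).eval (-ε) = (pA n).eval ε := by
  intro n
  induction n with
  | zero => simp [pA, pB]
  | succ n ih =>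
    set Bv : ℕ → ℝ := fun m => (pB m).eval ε with hBv
    set Qv : ℕ → ℝ := fun j => (pA j).eval (-ε) with hQv
    have hne : (((n : ℝ)+1)^2) ≠ 0 := by positivity
    apply mul_left_cancel₀ hne
    have split : (((n : ℝ)+1)^2) * ∑ j ∈ range (n+1+1), Bv (n+1-j) * Qv j
        = (∑ j ∈ range (n+1+1), ((((n : ℝ)+1)^2) - (j:ℝ)^2) * (Bv (n+1-j) * Qv j))
          + ∑ j ∈ range (n+1+1), (j:ℝ)^2 * (Bv (n+1-j) * Qv j) := by
      rw [Finset.mul_sum, ← Finset.sum_add_distrib]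
      exact Finset.sum_congr rfl fun j _ => by ring
    have drop : (∑ j ∈ range (n+1+1), ((((n : ℝ)+1)^2) - (j:ℝ)^2) * (Bv (n+1-j) * Qv j))
        = ∑ j ∈ range (n+1), ((((n : ℝ)+1)^2) - (j:ℝ)^2) * (Bv (n+1-j) * Qv j) := by
      rw [Finset.sum_range_succ]
      push_cast
      ring_nf
    have point : ∀ j ∈ range (n+1),
        ((((n : ℝ)+1)^2) - (j:ℝ)^2) * (Bv (n+1-j) * Qv j)
          = ((ε + (n + 1/4)) * (ε + (n + 3/4))) * (Bv (n-j) * Qv j)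
            - Bv (n-j) * ((((j:ℝ)+1)^2) * Qv (j+1)) := by
      intro j hj
      have hjn : j ≤ n := by simpa [Nat.lt_succ_iff] using hj
      have hsub : n + 1 - j = (n - j) + 1 := by omega
      have hcast : ((n - j : ℕ) : ℝ) = (n : ℝ) - (j : ℝ) := Nat.cast_sub hjn
      have hB : ((n : ℝ) - (j : ℝ) + 1) * Bv ((n-j)+1) = (2*ε + ((n:ℝ) - (j:ℝ))) * Bv (n-j) := by
        have := recB ε (n - j)
        rwa [hcast] at this
      have hQ : (((j:ℝ)+1)^2) * Qv (j+1) = (((-ε) + (j + 1/4)) * ((-ε) + (j + 3/4))) * Qv j :=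
        recA (-ε) j
      rw [hsub]
      linear_combination (((n:ℝ) + 1 + (j:ℝ)) * Qv j) * hB + (Bv (n-j)) * hQ
    have reindex : ∑ j ∈ range (n+1+1), (j:ℝ)^2 * (Bv (n+1-j) * Qv j)
        = ∑ j ∈ range (n+1), Bv (n-j) * ((((j:ℝ)+1)^2) * Qv (j+1)) := by
      rw [Finset.sum_range_succ']
      simp only [Nat.succ_sub_succ_eq_sub, Nat.cast_zero]
      have : ∀ j ∈ range (n+1), ((j:ℝ)+1)^2 * (Bv (n-j) * Qv (j+1))
          = Bv (n-j) * ((((j:ℝ)+1)^2) * Qv (j+1)) := fun j _ => by ring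
      rw [Finset.sum_congr rfl (fun j hj => by push_cast; exact this j hj)]
      simp
    rw [split, drop, Finset.sum_congr rfl point, Finset.sum_sub_distrib, reindex]
    have : ∑ j ∈ range (n+1), ((ε + ((n:ℝ) + 1/4)) * (ε + ((n:ℝ) + 3/4))) * (Bv (n-j) * Qv j)
        = ((ε + ((n:ℝ) + 1/4)) * (ε + ((n:ℝ) + 3/4))) * ∑ j ∈ range (n+1), Bv (n-j) * Qv j := by
      rw [Finset.mul_sum]
    rw [this]
    have hs : ∑ j ∈ range (n+1), Bv (n-j) * Qv j = (pA n).eval ε := ih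
    rw [hs, ← recA ε n]
    ring

end Stmt3Aux

namespace Stmt3Aux

open Polynomial Finset

/-- nonneg coefficients -/
def NN (p : Polynomial ℝ) : Prop := ∀ n, 0 ≤ p.coeff n

lemma NN.mul {p q : Polynomial ℝ} (hp : NN p) (hq : NN q) : NN (p * q) := by
  intro n
  rw [coeff_mul]
  exact Finset.sum_nonneg fun i _ => mul_nonneg (hp _) (hq _)

lemma NN_C {a : ℝ} (ha : 0 ≤ a) : NN (C a) := by
  intro n
  rcases n with _ | n <;> simp [coeff_C, ha]

lemma NN_X_add_C {a : ℝ} (ha : 0 ≤ a) : NN (X + C a) := by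
  intro n
  rcases n with _ | n
  · simpa using ha
  · rcases n with _ | n <;> simp [coeff_C, coeff_X]

lemma NN_CX_add_C {a b : ℝ} (ha : 0 ≤ a) (hb : 0 ≤ b) : NN (C a * X + C b) := by
  intro n
  rcases n with _ | n
  · simpa using hb
  · rcases n with _ | n <;> simp [coeff_C, ha]

lemma NN_one : NN (1 : Polynomial ℝ) := by
  intro n
  rcases n with _ | n <;> simp [coeff_one]

lemma nnA (k : ℕ) : NN (pA k) := by
  induction k with
  | zero => exact NN_one
  | succ k ih =>
    exact ih.mul ((NN_C (by positivity)).mul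
      ((NN_X_add_C (by positivity)).mul (NN_X_add_C (by positivity))))

lemma nnB (m : ℕ) : NN (pB m) := by
  induction m with
  | zero => exact NN_one
  | succ m ih =>
    exact ih.mul ((NN_C (by positivity)).mul (NN_CX_add_C (by norm_num) (by positivity)))

lemma coeff1_mul (p q : Polynomial ℝ) :
    (p * q).coeff 1 = p.coeff 0 * q.coeff 1 + p.coeff 1 * q.coeff 0 := by
  rw [coeff_mul]
  rw [show (1:ℕ) = 0 + 1 from rfl, Finset.Nat.antidiagonal_succ]
  rw [Finset.sum_cons, Finset.sum_map]
  simp [Function.Embedding.prodMap]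

end Stmt3Aux

namespace Stmt3Aux

open Polynomial Finset

lemma harm_succ (n : ℕ) : harm (n+1) = harm n + 1/((n:ℝ)+1) := Finset.sum_range_succ _ _

lemma qc0 (u v w : ℝ) : (C w * ((X + C u) * (X + C v))).coeff 0 = w * (u*v) := by
  rw [coeff_zero_eq_eval_zero]
  simp

lemma qc1 (u v w : ℝ) : (C w * ((X + C u) * (X + C v))).coeff 1 = w * (u+v) := by
  rw [coeff_C_mul, coeff1_mul]
  simp [coeff_C]

lemma rc0 (b w : ℝ) : (C w * (C 2 * X + C b)).coeff 0 = w * b := by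
  rw [coeff_zero_eq_eval_zero]
  simp

lemma rc1 (b w : ℝ) : (C w * (C 2 * X + C b)).coeff 1 = w * 2 := by
  rw [coeff_C_mul]
  simp [coeff_C]

lemma eval0_pB_succ : ∀ m : ℕ, (pB (m+1)).eval 0 = 0 := by
  intro m
  induction m with
  | zero => simp [pB]
  | succ m ih => rw [evalB, ih]; ring

lemma coeff0_pB_succ (m : ℕ) : (pB (m+1)).coeff 0 = 0 := by
  rw [coeff_zero_eq_eval_zero]; exact eval0_pB_succ m

lemma coeff1_pB : ∀ m : ℕ, (pB (m+1)).coeff 1 = 2/((m:ℝ)+1) := by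
  intro m
  induction m with
  | zero => show (pB 1).coeff 1 = _; rw [show pB 1 = pB 0 * (C (((0:ℕ):ℝ)+1)⁻¹ * (C 2 * X + C ((0:ℕ):ℝ))) from rfl,
      coeff1_mul, rc0, rc1]; norm_num [pB]
  | succ m ih =>
    rw [show pB (m+2) = pB (m+1) * (C ((((m+1:ℕ)):ℝ)+1)⁻¹ * (C 2 * X + C (((m+1:ℕ)):ℝ))) from rfl,
      coeff1_mul, rc0, rc1, coeff0_pB_succ, ih]
    push_cast
    have h1 : ((m:ℝ)+1) ≠ 0 := by positivity
    have h2 : ((m:ℝ)+2) ≠ 0 := by positivity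
    field_simp
    norm_num

lemma harm_g (k : ℕ) :
    2*(2*harm (4*(k+1)) - harm (2*(k+1)))
      = 2*(2*harm (4*k) - harm (2*k)) + (4/(4*(k:ℝ)+1) + 4/(4*(k:ℝ)+3)) := by
  have e4 : 4*(k+1) = (4*k)+1+1+1+1 := by ring
  have e2 : 2*(k+1) = (2*k)+1+1 := by ring
  rw [e4, e2, harm_succ, harm_succ, harm_succ, harm_succ, harm_succ, harm_succ]
  push_cast
  have h1 : (4*(k:ℝ)+1) ≠ 0 := by positivity
  have h2 : (4*(k:ℝ)+2) ≠ 0 := by positivity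
  have h3 : (4*(k:ℝ)+3) ≠ 0 := by positivity
  have h4 : (4*(k:ℝ)+4) ≠ 0 := by positivity
  have h5 : (2*(k:ℝ)+1) ≠ 0 := by positivity
  have h6 : (2*(k:ℝ)+2) ≠ 0 := by positivity
  field_simp
  ring

lemma coeff1_pA : ∀ k : ℕ, (pA k).coeff 1 = (pA k).eval 0 * (2*(2*harm (4*k) - harm (2*k))) := by
  intro k
  induction k with
  | zero => simp [pA, harm, coeff_one]
  | succ k ih =>
    rw [show pA (k+1) = pA k * (C ((((k : ℝ)+1)^2)⁻¹) * ((X + C ((k : ℝ) + 1/4)) * (X + C ((k : ℝ) + 3/4)))) from rfl,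
      coeff1_mul, qc0, qc1, coeff_zero_eq_eval_zero, ih, harm_g, eval_mul]
    simp only [eval_mul, eval_C, eval_add, eval_X]
    have h1 : (4*(k:ℝ)+1) ≠ 0 := by positivity
    have h3 : (4*(k:ℝ)+3) ≠ 0 := by positivity
    have h7 : ((k:ℝ)+1)^2 ≠ 0 := by positivity
    field_simp
    ring

end Stmt3Aux

namespace Stmt3Aux

open Polynomial Finset

lemma eval_nonneg {p : Polynomial ℝ} (hp : NN p) {r : ℝ} (hr : 0 ≤ r) : 0 ≤ p.eval r := by
  rw [eval_eq_sum_range]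
  exact Finset.sum_nonneg fun i _ => mul_nonneg (hp i) (pow_nonneg hr i)

lemma abs_eval_le {p : Polynomial ℝ} (hp : NN p) {ε r : ℝ} (h : |ε| ≤ r) :
    |p.eval ε| ≤ p.eval r := by
  rw [eval_eq_sum_range, eval_eq_sum_range]
  refine (Finset.abs_sum_le_sum_abs _ _).trans (Finset.sum_le_sum fun i _ => ?_)
  rw [abs_mul, abs_of_nonneg (hp i), abs_pow]
  exact mul_le_mul_of_nonneg_left (pow_le_pow_left₀ (abs_nonneg _) h i) (hp i)

lemma coeff_mul_pow_le_eval {p : Polynomial ℝ} (hp : NN p) {r : ℝ} (hr : 0 ≤ r) (i : ℕ) :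
    p.coeff i * r^i ≤ p.eval r := by
  rcases lt_or_ge p.natDegree i with hi | hi
  · rw [coeff_eq_zero_of_natDegree_lt hi, zero_mul]
    exact eval_nonneg hp hr
  · rw [eval_eq_sum_range' (Nat.lt_succ_of_le le_rfl) r]
    exact Finset.single_le_sum (f := fun j => p.coeff j * r^j)
      (fun j _ => mul_nonneg (hp j) (pow_nonneg hr j))
      (Finset.mem_range.2 (Nat.lt_succ_of_le hi))

lemma sum_split (c : ℕ → ℝ) (M : ℕ) (t : ℝ) :
    ∑ i ∈ range (M+2), c i * t^i
      = (∑ i ∈ range M, c (i+2) * t^(i+2)) + (c 1 * t + c 0) := by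
  rw [Finset.sum_range_succ', Finset.sum_range_succ']
  simp [pow_succ]
  ring

lemma taylor_bound {p : Polynomial ℝ} (hp : NN p) {ε : ℝ} (hε : |ε| ≤ 1/8) :
    |p.eval ε - p.eval 0 - ε * p.coeff 1| ≤ 64 * ε^2 * p.eval (1/8) := by
  have hlt : p.natDegree < p.natDegree + 2 := by omega
  have e1 := eval_eq_sum_range' hlt ε
  have e2 := eval_eq_sum_range' hlt (1/8 : ℝ)
  have e0 : p.eval 0 = p.coeff 0 := by
    rw [coeff_zero_eq_eval_zero]
  rw [e1, e0, sum_split]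
  have key : |∑ i ∈ range p.natDegree, p.coeff (i+2) * ε^(i+2)|
      ≤ ∑ i ∈ range p.natDegree, (64 * ε^2) * (p.coeff (i+2) * (1/8:ℝ)^(i+2)) := by
    refine (Finset.abs_sum_le_sum_abs _ _).trans (Finset.sum_le_sum fun i _ => ?_)
    rw [abs_mul, abs_of_nonneg (hp (i+2)), abs_pow]
    have h1 : |ε|^(i+2) ≤ 64 * ε^2 * (1/8:ℝ)^(i+2) := by
      have : |ε|^(i+2) = ε^2 * |ε|^i := by
        rw [pow_add, sq_abs]; ring
      rw [this]
      have h2 : |ε|^i ≤ (1/8:ℝ)^i := pow_le_pow_left₀ (abs_nonneg _) hε i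
      have h3 : (64 : ℝ) * (1/8:ℝ)^(i+2) = (1/8:ℝ)^i := by
        rw [pow_add]; ring
      calc ε^2 * |ε|^i ≤ ε^2 * (1/8:ℝ)^i := by
            exact mul_le_mul_of_nonneg_left h2 (sq_nonneg ε)
        _ = 64 * ε^2 * (1/8:ℝ)^(i+2) := by rw [← h3]; ring
    calc p.coeff (i+2) * |ε|^(i+2) ≤ p.coeff (i+2) * (64 * ε^2 * (1/8:ℝ)^(i+2)) :=
          mul_le_mul_of_nonneg_left h1 (hp (i+2))
      _ = (64 * ε^2) * (p.coeff (i+2) * (1/8:ℝ)^(i+2)) := by ring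
  have tail_le : ∑ i ∈ range p.natDegree, p.coeff (i+2) * (1/8:ℝ)^(i+2) ≤ p.eval (1/8) := by
    rw [e2, sum_split]
    have : 0 ≤ p.coeff 1 * (1/8:ℝ) + p.coeff 0 :=
      add_nonneg (mul_nonneg (hp 1) (by norm_num)) (hp 0)
    linarith
  calc |(∑ i ∈ range p.natDegree, p.coeff (i+2) * ε^(i+2)) + (p.coeff 1 * ε + p.coeff 0)
        - p.coeff 0 - ε * p.coeff 1|
      = |∑ i ∈ range p.natDegree, p.coeff (i+2) * ε^(i+2)| := by
        congr 1
        ring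
    _ ≤ ∑ i ∈ range p.natDegree, (64 * ε^2) * (p.coeff (i+2) * (1/8:ℝ)^(i+2)) := key
    _ = (64 * ε^2) * ∑ i ∈ range p.natDegree, p.coeff (i+2) * (1/8:ℝ)^(i+2) := by
        rw [Finset.mul_sum]
    _ ≤ 64 * ε^2 * p.eval (1/8) := by
        exact mul_le_mul_of_nonneg_left tail_le (by positivity)

end Stmt3Aux

namespace Stmt3Aux

open Polynomial Finset Filter

lemma summable_of_eval18 {P : ℕ → Polynomial ℝ} (hnn : ∀ k, NN (P k))
    (hw : Summable (fun k => (P k).eval (1/8) * (8/9:ℝ)^k))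
    {ε : ℝ} (hε : |ε| ≤ 1/8) :
    Summable (fun k => (P k).eval ε * (8/9:ℝ)^k) := by
  refine Summable.of_norm_bounded hw fun k => ?_
  rw [Real.norm_eq_abs, abs_mul, abs_pow]
  have h1 : |(8/9:ℝ)| = 8/9 := by norm_num
  rw [h1]
  exact mul_le_mul_of_nonneg_right (abs_eval_le (hnn k) hε) (by positivity)

lemma summable_coeff1 {P : ℕ → Polynomial ℝ} (hnn : ∀ k, NN (P k))
    (hw : Summable (fun k => (P k).eval (1/8) * (8/9:ℝ)^k)) :
    Summable (fun k => (P k).coeff 1 * (8/9:ℝ)^k) := by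
  refine Summable.of_norm_bounded (hw.mul_left 8) fun k => ?_
  rw [Real.norm_eq_abs, abs_mul, abs_pow]
  have h1 : |(8/9:ℝ)| = 8/9 := by norm_num
  rw [h1, abs_of_nonneg ((hnn k) 1)]
  have h2 : (P k).coeff 1 ≤ 8 * (P k).eval (1/8) := by
    have := coeff_mul_pow_le_eval (hnn k) (by norm_num : (0:ℝ) ≤ 1/8) 1
    rw [pow_one] at this
    linarith
  calc (P k).coeff 1 * (8/9:ℝ)^k ≤ (8 * (P k).eval (1/8)) * (8/9:ℝ)^k :=
        mul_le_mul_of_nonneg_right h2 (by positivity)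
    _ = 8 * ((P k).eval (1/8) * (8/9:ℝ)^k) := by ring

lemma abs_tsum_le' {e : ℕ → ℝ} (h : Summable fun k => |e k|) :
    |∑' k, e k| ≤ ∑' k, |e k| := by
  simpa [Real.norm_eq_abs] using
    norm_tsum_le_tsum_norm (f := e) (by simpa [Real.norm_eq_abs] using h)

lemma hasDerivAt_of_quadratic_bound {f : ℝ → ℝ} {L W : ℝ}
    (h : ∀ ε : ℝ, |ε| ≤ 1/8 → |f ε - f 0 - ε * L| ≤ W * ε^2) :
    HasDerivAt f L 0 := by
  rw [hasDerivAt_iff_isLittleO, Asymptotics.isLittleO_iff]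
  intro c hc
  have hδ : 0 < min (1/8 : ℝ) (c / (|W| + 1)) := by
    apply lt_min (by norm_num)
    positivity
  filter_upwards [Metric.ball_mem_nhds (0:ℝ) hδ] with ε hεball
  rw [Metric.mem_ball, Real.dist_eq, sub_zero] at hεball
  have hε8 : |ε| ≤ 1/8 := le_of_lt (lt_of_lt_of_le hεball (min_le_left _ _))
  have hεc : |ε| ≤ c / (|W| + 1) := le_of_lt (lt_of_lt_of_le hεball (min_le_right _ _))
  have h1 := h ε hε8
  simp only [sub_zero, smul_eq_mul, Real.norm_eq_abs]
  have hW1 : (0:ℝ) < |W| + 1 := by positivity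
  calc |f ε - f 0 - ε * L| ≤ W * ε^2 := h1
    _ ≤ |W| * ε^2 := by
        apply mul_le_mul_of_nonneg_right (le_abs_self W) (sq_nonneg ε)
    _ = (|W| * |ε|) * |ε| := by
        rw [sq, ← abs_mul_abs_self ε]; ring
    _ ≤ c * |ε| := by
        apply mul_le_mul_of_nonneg_right _ (abs_nonneg ε)
        have h2 : |W| * |ε| ≤ |W| * (c / (|W| + 1)) :=
          mul_le_mul_of_nonneg_left hεc (abs_nonneg W)
        have h3 : |W| * (c / (|W| + 1)) ≤ c := by
          rw [mul_div_assoc']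
          rw [div_le_iff₀ hW1]
          nlinarith [abs_nonneg W, le_of_lt hc]
        linarith

lemma hasDerivAt_tsum_poly {P : ℕ → Polynomial ℝ} (hnn : ∀ k, NN (P k))
    (hw : Summable (fun k => (P k).eval (1/8) * (8/9:ℝ)^k)) :
    HasDerivAt (fun ε => ∑' k, (P k).eval ε * (8/9:ℝ)^k)
      (∑' k, (P k).coeff 1 * (8/9:ℝ)^k) 0 := by
  have hL := summable_coeff1 hnn hw
  apply hasDerivAt_of_quadratic_bound
    (W := 64 * ∑' k, (P k).eval (1/8) * (8/9:ℝ)^k)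
  intro ε hε
  have hSε := summable_of_eval18 hnn hw hε
  have hS0 := summable_of_eval18 hnn hw (by norm_num : |(0:ℝ)| ≤ 1/8)
  have e1 : (∑' k, (P k).eval ε * (8/9:ℝ)^k) - (∑' k, (P k).eval 0 * (8/9:ℝ)^k)
        - ε * ∑' k, (P k).coeff 1 * (8/9:ℝ)^k
      = ∑' k, ((P k).eval ε * (8/9:ℝ)^k - (P k).eval 0 * (8/9:ℝ)^k
          - ε * ((P k).coeff 1 * (8/9:ℝ)^k)) := by
    rw [← tsum_mul_left, ← Summable.tsum_sub hSε hS0, ← Summable.tsum_sub (hSε.sub hS0) (hL.mul_left ε)]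
  rw [e1]
  have hbound : ∀ k, |(P k).eval ε * (8/9:ℝ)^k - (P k).eval 0 * (8/9:ℝ)^k
          - ε * ((P k).coeff 1 * (8/9:ℝ)^k)|
        ≤ (64 * ε^2) * ((P k).eval (1/8) * (8/9:ℝ)^k) := by
    intro k
    have e2 : (P k).eval ε * (8/9:ℝ)^k - (P k).eval 0 * (8/9:ℝ)^k
          - ε * ((P k).coeff 1 * (8/9:ℝ)^k)
        = ((P k).eval ε - (P k).eval 0 - ε * (P k).coeff 1) * (8/9:ℝ)^k := by ring
    rw [e2, abs_mul, abs_pow]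
    have h1 : |(8/9:ℝ)| = 8/9 := by norm_num
    rw [h1]
    calc |(P k).eval ε - (P k).eval 0 - ε * (P k).coeff 1| * (8/9:ℝ)^k
        ≤ (64 * ε^2 * (P k).eval (1/8)) * (8/9:ℝ)^k :=
          mul_le_mul_of_nonneg_right (taylor_bound (hnn k) hε) (by positivity)
      _ = (64 * ε^2) * ((P k).eval (1/8) * (8/9:ℝ)^k) := by ring
  have hsum_err : Summable (fun k => |(P k).eval ε * (8/9:ℝ)^k - (P k).eval 0 * (8/9:ℝ)^k
          - ε * ((P k).coeff 1 * (8/9:ℝ)^k)|) :=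
    Summable.of_nonneg_of_le (fun k => abs_nonneg _) hbound (hw.mul_left _)
  calc |∑' k, ((P k).eval ε * (8/9:ℝ)^k - (P k).eval 0 * (8/9:ℝ)^k
          - ε * ((P k).coeff 1 * (8/9:ℝ)^k))|
      ≤ ∑' k, |(P k).eval ε * (8/9:ℝ)^k - (P k).eval 0 * (8/9:ℝ)^k
          - ε * ((P k).coeff 1 * (8/9:ℝ)^k)| := abs_tsum_le' hsum_err
    _ ≤ ∑' k, (64 * ε^2) * ((P k).eval (1/8) * (8/9:ℝ)^k) :=
        Summable.tsum_le_tsum hbound hsum_err (hw.mul_left _)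
    _ = (64 * ∑' k, (P k).eval (1/8) * (8/9:ℝ)^k) * ε^2 := by
        rw [tsum_mul_left]; ring
end Stmt3Aux

namespace Stmt3Aux

open Polynomial Finset Filter

lemma hwA : Summable (fun k => (pA k).eval (1/8) * (8/9:ℝ)^k) := by
  apply summable_of_ratio_norm_eventually_le (r := 8/9) (by norm_num)
  apply Eventually.of_forall
  intro k
  have h0 : 0 ≤ (pA k).eval (1/8) := eval_nonneg (nnA k) (by norm_num)
  have h1 : 0 ≤ (pA (k+1)).eval (1/8) := eval_nonneg (nnA (k+1)) (by norm_num)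
  rw [Real.norm_eq_abs, Real.norm_eq_abs, abs_of_nonneg (by positivity),
    abs_of_nonneg (by positivity)]
  rw [evalA]
  have hfac : (((k:ℝ)+1)^2)⁻¹ * (((1/8:ℝ) + (k + 1/4)) * ((1/8:ℝ) + (k + 3/4))) ≤ 1 := by
    rw [inv_mul_le_iff₀ (by positivity)]
    nlinarith [Nat.cast_nonneg (α := ℝ) k]
  have hpow : (0:ℝ) ≤ (8/9:ℝ)^k := by positivity
  calc (pA k).eval (1/8) * ((((k:ℝ)+1)^2)⁻¹ * (((1/8:ℝ) + (k + 1/4)) * ((1/8:ℝ) + (k + 3/4))))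
        * (8/9:ℝ)^(k+1)
      ≤ (pA k).eval (1/8) * 1 * (8/9:ℝ)^(k+1) := by
        apply mul_le_mul_of_nonneg_right _ (by positivity)
        exact mul_le_mul_of_nonneg_left hfac h0
    _ = 8/9 * ((pA k).eval (1/8) * (8/9:ℝ)^k) := by rw [pow_succ]; ring

lemma evalB18_le_one : ∀ m, (pB m).eval (1/8) ≤ 1 := by
  intro m
  induction m with
  | zero => simp [pB]
  | succ m ih =>
    rw [evalB]
    have h0 : 0 ≤ (pB m).eval (1/8) := eval_nonneg (nnB m) (by norm_num)
    have hfac : (((m:ℝ)+1)⁻¹) * (2 * (1/8:ℝ) + m) ≤ 1 := by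
      rw [inv_mul_le_iff₀ (by positivity)]
      linarith [Nat.cast_nonneg (α := ℝ) m]
    calc (pB m).eval (1/8) * ((((m:ℝ)+1)⁻¹) * (2 * (1/8:ℝ) + m)) ≤ (pB m).eval (1/8) * 1 :=
          mul_le_mul_of_nonneg_left hfac h0
      _ ≤ 1 := by rw [mul_one]; exact ih

lemma hwB : Summable (fun m => (pB m).eval (1/8) * (8/9:ℝ)^m) := by
  apply Summable.of_nonneg_of_le
    (fun m => mul_nonneg (eval_nonneg (nnB m) (by norm_num)) (by positivity))
    (fun m => ?_) (summable_geometric_of_lt_one (by norm_num) (by norm_num : (8/9:ℝ) < 1))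
  calc (pB m).eval (1/8) * (8/9:ℝ)^m ≤ 1 * (8/9:ℝ)^m :=
        mul_le_mul_of_nonneg_right (evalB18_le_one m) (by positivity)
    _ = (8/9:ℝ)^m := one_mul _

lemma LB_val : ∑' m, (pB m).coeff 1 * (8/9:ℝ)^m = 4 * Real.log 3 := by
  have hsum : Summable (fun m => (pB m).coeff 1 * (8/9:ℝ)^m) := summable_coeff1 nnB hwB
  rw [Summable.tsum_eq_zero_add hsum]
  have h0 : (pB 0).coeff 1 * (8/9:ℝ)^0 = 0 := by simp [pB, coeff_one]
  rw [h0, zero_add]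
  have hlog : HasSum (fun n : ℕ => ((8/9:ℝ))^(n+1)/(n+1)) (-Real.log (1 - 8/9)) :=
    Real.hasSum_pow_div_log_of_abs_lt_one (by rw [abs_of_nonneg]; norm_num; norm_num)
  have hlog2 : HasSum (fun n : ℕ => 2 * (((8/9:ℝ))^(n+1)/(n+1))) (2 * (-Real.log (1 - 8/9))) :=
    hlog.mul_left 2
  have hcongr : (fun n : ℕ => (pB (n+1)).coeff 1 * (8/9:ℝ)^(n+1))
      = fun n : ℕ => 2 * (((8/9:ℝ))^(n+1)/(n+1)) := by
    funext n
    rw [coeff1_pB]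
    ring
  rw [hcongr, hlog2.tsum_eq]
  have h19 : (1 - (8/9:ℝ)) = (9:ℝ)⁻¹ := by norm_num
  rw [h19, Real.log_inv]
  have h9 : (9:ℝ) = 3^(2:ℕ) := by norm_num
  rw [h9, Real.log_pow]
  push_cast
  ring

lemma Fv0 : ∑' m, (pB m).eval 0 * (8/9:ℝ)^m = 1 := by
  rw [tsum_eq_single 0]
  · simp [pB]
  · intro m hm
    rcases m with _ | m
    · exact absurd rfl hm
    · rw [eval0_pB_succ]; ring

end Stmt3Aux

namespace Stmt3Aux

open Polynomial Finset Filter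

lemma summable_norm_of_eval18 {P : ℕ → Polynomial ℝ} (hnn : ∀ k, NN (P k))
    (hw : Summable (fun k => (P k).eval (1/8) * (8/9:ℝ)^k))
    {ε : ℝ} (hε : |ε| ≤ 1/8) :
    Summable (fun k => ‖(P k).eval ε * (8/9:ℝ)^k‖) := by
  refine Summable.of_norm_bounded hw fun k => ?_
  rw [norm_norm, Real.norm_eq_abs, abs_mul, abs_pow]
  have h1 : |(8/9:ℝ)| = 8/9 := by norm_num
  rw [h1]
  exact mul_le_mul_of_nonneg_right (abs_eval_le (hnn k) hε) (by positivity)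

lemma funeq {ε : ℝ} (hε : |ε| ≤ 1/8) :
    (∑' m, (pB m).eval ε * (8/9:ℝ)^m) * (∑' j, (pA j).eval (-ε) * (8/9:ℝ)^j)
      = ∑' n, (pA n).eval ε * (8/9:ℝ)^n := by
  have hεn : |(-ε)| ≤ 1/8 := by rwa [abs_neg]
  rw [tsum_mul_tsum_eq_tsum_sum_range_of_summable_norm
    (summable_norm_of_eval18 nnB hwB hε) (summable_norm_of_eval18 nnA hwA hεn)]
  apply tsum_congr
  intro n
  have step1 : ∀ k ∈ range (n+1),
      ((pB k).eval ε * (8/9:ℝ)^k) * ((pA (n-k)).eval (-ε) * (8/9:ℝ)^(n-k))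
        = ((pB k).eval ε * (pA (n-k)).eval (-ε)) * (8/9:ℝ)^n := by
    intro k hk
    have hkn : k ≤ n := by simpa [Nat.lt_succ_iff] using hk
    have : (8/9:ℝ)^k * (8/9:ℝ)^(n-k) = (8/9:ℝ)^n := by
      rw [← pow_add]
      congr 1
      omega
    calc ((pB k).eval ε * (8/9:ℝ)^k) * ((pA (n-k)).eval (-ε) * (8/9:ℝ)^(n-k))
        = ((pB k).eval ε * (pA (n-k)).eval (-ε)) * ((8/9:ℝ)^k * (8/9:ℝ)^(n-k)) := by ring
      _ = ((pB k).eval ε * (pA (n-k)).eval (-ε)) * (8/9:ℝ)^n := by rw [this]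
  rw [Finset.sum_congr rfl step1, ← Finset.sum_mul]
  have step2 : ∑ k ∈ range (n+1), (pB k).eval ε * (pA (n-k)).eval (-ε)
      = (pA n).eval ε := by
    have refl1 : ∑ k ∈ range (n+1), (pB k).eval ε * (pA (n-k)).eval (-ε)
        = ∑ k ∈ range (n+1), (fun j => (pB (n-j)).eval ε * (pA j).eval (-ε)) (n - k) := by
      apply Finset.sum_congr rfl
      intro k hk
      have hkn : k ≤ n := by simpa [Nat.lt_succ_iff] using hk
      have : n - (n - k) = k := by omega
      simp only [this]
    rw [refl1]
    have refl2 := Finset.sum_range_reflect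
      (fun j => (pB (n-j)).eval ε * (pA j).eval (-ε)) (n+1)
    simp only [Nat.add_sub_cancel] at refl2
    rw [refl2]
    exact euler ε n
  rw [step2]

lemma main_identity :
    (∑' k, (pA k).coeff 1 * (8/9:ℝ)^k)
      = 2 * Real.log 3 * ∑' k, (pA k).eval 0 * (8/9:ℝ)^k := by
  have hUd : HasDerivAt (fun ε => ∑' k, (pA k).eval ε * (8/9:ℝ)^k)
      (∑' k, (pA k).coeff 1 * (8/9:ℝ)^k) 0 := hasDerivAt_tsum_poly nnA hwA
  have hFd : HasDerivAt (fun ε => ∑' m, (pB m).eval ε * (8/9:ℝ)^m)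
      (∑' m, (pB m).coeff 1 * (8/9:ℝ)^m) 0 := hasDerivAt_tsum_poly nnB hwB
  have hUd' : HasDerivAt (fun ε => ∑' k, (pA k).eval ε * (8/9:ℝ)^k)
      (∑' k, (pA k).coeff 1 * (8/9:ℝ)^k) ((fun ε : ℝ => -ε) 0) := by
    simpa using hUd
  have hUn : HasDerivAt (fun ε : ℝ => ∑' k, (pA k).eval (-ε) * (8/9:ℝ)^k)
      (-(∑' k, (pA k).coeff 1 * (8/9:ℝ)^k)) 0 := by
    have hneg : HasDerivAt (fun ε : ℝ => -ε) (-1) 0 := hasDerivAt_neg 0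
    have := hUd'.comp 0 hneg
    simpa [Function.comp_def, mul_comm] using this
  have hprod : HasDerivAt
      (fun ε : ℝ => (∑' m, (pB m).eval ε * (8/9:ℝ)^m) * (∑' k, (pA k).eval (-ε) * (8/9:ℝ)^k))
      ((∑' m, (pB m).coeff 1 * (8/9:ℝ)^m) * (∑' k, (pA k).eval (-(0:ℝ)) * (8/9:ℝ)^k)
        + (∑' m, (pB m).eval 0 * (8/9:ℝ)^m) * (-(∑' k, (pA k).coeff 1 * (8/9:ℝ)^k))) 0 :=
    hFd.mul hUn
  have heq : (fun ε : ℝ => ∑' k, (pA k).eval ε * (8/9:ℝ)^k)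
      =ᶠ[nhds 0] (fun ε : ℝ =>
        (∑' m, (pB m).eval ε * (8/9:ℝ)^m) * (∑' k, (pA k).eval (-ε) * (8/9:ℝ)^k)) := by
    filter_upwards [Metric.ball_mem_nhds (0:ℝ) (by norm_num : (0:ℝ) < 1/8)] with ε hball
    rw [Metric.mem_ball, Real.dist_eq, sub_zero] at hball
    exact (funeq (le_of_lt hball)).symm
  have hU2 : HasDerivAt (fun ε : ℝ => ∑' k, (pA k).eval ε * (8/9:ℝ)^k)
      ((∑' m, (pB m).coeff 1 * (8/9:ℝ)^m) * (∑' k, (pA k).eval (-(0:ℝ)) * (8/9:ℝ)^k)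
        + (∑' m, (pB m).eval 0 * (8/9:ℝ)^m) * (-(∑' k, (pA k).coeff 1 * (8/9:ℝ)^k))) 0 :=
    hprod.congr_of_eventuallyEq heq
  have huni := hUd.unique hU2
  rw [LB_val, Fv0, neg_zero] at huni
  linarith [huni]

end Stmt3Aux

namespace Stmt3Aux

open Polynomial Finset

lemma bridge : ∀ k : ℕ, (pA k).eval 0 * (8/9:ℝ)^k * (72:ℝ)^k
    = (Nat.centralBinom k : ℝ) * (Nat.centralBinom (2*k) : ℝ) := by
  intro k
  induction k with
  | zero => simp [pA, Nat.centralBinom]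
  | succ k ih =>
    have r1 : ((k:ℝ)+1) * (Nat.centralBinom (k+1) : ℝ)
        = 2*(2*(k:ℝ)+1) * (Nat.centralBinom k : ℝ) := by
      exact_mod_cast Nat.succ_mul_centralBinom_succ k
    have r2 : (2*(k:ℝ)+1) * (Nat.centralBinom (2*k+1) : ℝ)
        = 2*(4*(k:ℝ)+1) * (Nat.centralBinom (2*k) : ℝ) := by
      have := Nat.succ_mul_centralBinom_succ (2*k)
      have h : ((2*k+1 : ℕ) : ℝ) * (Nat.centralBinom (2*k+1) : ℝ)
          = ((2*(2*(2*k)+1) : ℕ) : ℝ) * (Nat.centralBinom (2*k) : ℝ) := by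
        exact_mod_cast congrArg (fun n : ℕ => (n : ℝ)) this
      push_cast at h
      push_cast
      linarith
    have r3 : (2*(k:ℝ)+2) * (Nat.centralBinom (2*k+2) : ℝ)
        = 2*(4*(k:ℝ)+3) * (Nat.centralBinom (2*k+1) : ℝ) := by
      have := Nat.succ_mul_centralBinom_succ (2*k+1)
      have h : ((2*k+1+1 : ℕ) : ℝ) * (Nat.centralBinom (2*k+1+1) : ℝ)
          = ((2*(2*(2*k+1)+1) : ℕ) : ℝ) * (Nat.centralBinom (2*k+1) : ℝ) := by
        exact_mod_cast congrArg (fun n : ℕ => (n : ℝ)) this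
      push_cast at h
      push_cast
      linarith
    have key : ((k:ℝ)+1)^2 * ((Nat.centralBinom (k+1) : ℝ) * (Nat.centralBinom (2*k+2) : ℝ))
        = 4*(4*(k:ℝ)+1)*(4*(k:ℝ)+3) * ((Nat.centralBinom k : ℝ) * (Nat.centralBinom (2*k) : ℝ)) := by
      linear_combination (((k:ℝ)+1) * (Nat.centralBinom (2*k+2) : ℝ)) * r1
        + ((2*(k:ℝ)+1) * (Nat.centralBinom k : ℝ)) * r3
        + (2*(4*(k:ℝ)+3) * (Nat.centralBinom k : ℝ)) * r2
    have hidx : 2*(k+1) = 2*k+2 := by omega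
    rw [hidx]
    have e1 : (pA (k+1)).eval 0 * (8/9:ℝ)^(k+1) * (72:ℝ)^(k+1)
        = ((pA k).eval 0 * (8/9:ℝ)^k * (72:ℝ)^k)
          * (((((k:ℝ)+1)^2)⁻¹ * (((0:ℝ) + ((k:ℝ) + 1/4)) * ((0:ℝ) + ((k:ℝ) + 3/4)))) * (8/9*72)) := by
      rw [evalA, pow_succ, pow_succ]
      ring
    rw [e1, ih]
    have h2 : (((k:ℝ)+1)^2) ≠ 0 := by positivity
    field_simp
    linear_combination (-144 : ℝ) * key
end Stmt3Aux

namespace Stmt3Aux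

open Polynomial

lemma aa_eq (k : ℕ) :
    (Nat.choose (2*k) k : ℝ) * (Nat.choose (4*k) (2*k) : ℝ) / (72:ℝ)^k
      = (pA k).eval 0 * (8/9:ℝ)^k := by
  have h1 : (Nat.choose (2*k) k : ℝ) = (Nat.centralBinom k : ℝ) := by
    rw [Nat.centralBinom]
  have h2 : (Nat.choose (4*k) (2*k) : ℝ) = (Nat.centralBinom (2*k) : ℝ) := by
    rw [Nat.centralBinom]
    congr 2
    omega
  have h3 : ((72:ℝ)^k) ≠ 0 := by positivity
  rw [h1, h2, ← bridge k]
  field_simp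

end Stmt3Aux


open Stmt3Aux in
theorem stmt_3 :
    Summable (fun k : ℕ =>
      ((Nat.choose (2 * k) k : ℝ) * (Nat.choose (4 * k) (2 * k) : ℝ) / (72 : ℝ) ^ k) *
        (2 * harm (4 * k) - harm (2 * k))) ∧
    Summable (fun k : ℕ =>
      (Nat.choose (2 * k) k : ℝ) * (Nat.choose (4 * k) (2 * k) : ℝ) / (72 : ℝ) ^ k) ∧
    ∑' k : ℕ, ((Nat.choose (2 * k) k : ℝ) * (Nat.choose (4 * k) (2 * k) : ℝ) / (72 : ℝ) ^ k) *
        (2 * harm (4 * k) - harm (2 * k)) =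
      Real.log 3 *
        ∑' k : ℕ, (Nat.choose (2 * k) k : ℝ) * (Nat.choose (4 * k) (2 * k) : ℝ) / (72 : ℝ) ^ k := by
  have hterm : ∀ k : ℕ,
      ((Nat.choose (2 * k) k : ℝ) * (Nat.choose (4 * k) (2 * k) : ℝ) / (72 : ℝ) ^ k) *
        (2 * harm (4 * k) - harm (2 * k))
      = ((pA k).coeff 1 * (8/9:ℝ)^k) / 2 := by
    intro k
    rw [aa_eq, coeff1_pA]
    ring
  have hterm2 : ∀ k : ℕ,
      (Nat.choose (2 * k) k : ℝ) * (Nat.choose (4 * k) (2 * k) : ℝ) / (72 : ℝ) ^ k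
      = (pA k).eval 0 * (8/9:ℝ)^k := fun k => aa_eq k
  refine ⟨?_, ?_, ?_⟩
  · have : (fun k : ℕ =>
        ((Nat.choose (2 * k) k : ℝ) * (Nat.choose (4 * k) (2 * k) : ℝ) / (72 : ℝ) ^ k) *
          (2 * harm (4 * k) - harm (2 * k)))
        = fun k : ℕ => ((pA k).coeff 1 * (8/9:ℝ)^k) / 2 := funext hterm
    rw [this]
    exact (summable_coeff1 nnA hwA).div_const 2
  · have : (fun k : ℕ =>
        (Nat.choose (2 * k) k : ℝ) * (Nat.choose (4 * k) (2 * k) : ℝ) / (72 : ℝ) ^ k)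
        = fun k : ℕ => (pA k).eval 0 * (8/9:ℝ)^k := funext hterm2
    rw [this]
    exact summable_of_eval18 nnA hwA (by norm_num : |(0:ℝ)| ≤ 1/8)
  · rw [tsum_congr hterm, tsum_congr hterm2, tsum_div_const, main_identity]
    ring
end
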